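/- Well-posedness of the hyperbolic delay system: let Ω ⊆ ℝⁿ open, c₀,…,c_n ∈ L(L₂(Ω)), k ∈ L(L₂(Ω)ⁿ) selfadjoint with k ≥ d > 0, h₀,…,h_n > 0, and let A be the skew-selfadjoint block operator ((0, div₀),(grad, 0)) (or ((0,div),(grad₀,0))). Define M₁(z)q = c₀e^{-h₀z}q₀ - Σ_{i=1}^n c_i k^{-1} e^{-h_i z} q_i and M(z)(v,q) = (v + z^{-1}M₁(z)q, k^{-1}q). Then there exist c > 0 and ρ₀ > 0 such that Re⟨(zM(z)+A)x, x⟩ ≥ c‖x‖² for all z with Re z ≥ ρ₀ and x ∈ dom(A); in particular the evolutionary problem associated with (M,A) is well-posed. -/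

import Mathlib

open MeasureTheory

set_option synthInstance.maxHeartbeats 1000000
set_option maxHeartbeats 1000000

local notation "⟪" x ", " y "⟫" => @inner ℂ _ _ x y

/-- `PiLp 2` of complete spaces is complete (its uniformity is the product uniformity). -/
instance piLp_completeSpace {ι : Type*} {β : ι → Type*} [∀ i, UniformSpace (β i)]
    [∀ i, CompleteSpace (β i)] : CompleteSpace (PiLp 2 β) :=
  inferInstance

/-- The operator `M₁(z)(v,q) = c₀ e^{-h₀z} v - Σ_{i=1}^n c_i e^{-h_i z} (k⁻¹q)_i` of the
hyperbolic delay equation, acting on `V × Vⁿ` (abstracting `L₂(Ω) × L₂(Ω)ⁿ`). -/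
noncomputable def delayM1 {V : Type*} [NormedAddCommGroup V] [InnerProductSpace ℂ V]
    (n : ℕ) (c₀ : V →L[ℂ] V) (c : Fin n → V →L[ℂ] V)
    (kinv : (PiLp 2 fun _ : Fin n => V) →L[ℂ] (PiLp 2 fun _ : Fin n => V))
    (h : Fin (n + 1) → ℝ) (z : ℂ)
    (x : WithLp 2 (V × PiLp 2 fun _ : Fin n => V)) : V :=
  Complex.exp (-(h 0 : ℂ) * z) • c₀ (WithLp.equiv 2 _ x).1
    - ∑ i : Fin n, Complex.exp (-(h i.succ : ℂ) * z) •
        (c i) ((kinv (WithLp.equiv 2 _ x).2) i)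

/-- The material law `M(z)(v,q) = (v + z⁻¹ M₁(z)(v,q), k⁻¹q)` of the hyperbolic delay
equation. -/
noncomputable def delayM {V : Type*} [NormedAddCommGroup V] [InnerProductSpace ℂ V]
    (n : ℕ) (c₀ : V →L[ℂ] V) (c : Fin n → V →L[ℂ] V)
    (kinv : (PiLp 2 fun _ : Fin n => V) →L[ℂ] (PiLp 2 fun _ : Fin n => V))
    (h : Fin (n + 1) → ℝ) (z : ℂ)
    (x : WithLp 2 (V × PiLp 2 fun _ : Fin n => V)) :
    WithLp 2 (V × PiLp 2 fun _ : Fin n => V) :=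
  (WithLp.equiv 2 _).symm
    ((WithLp.equiv 2 _ x).1 + z⁻¹ • delayM1 n c₀ c kinv h z x,
      kinv (WithLp.equiv 2 _ x).2)

/-!
The skew-selfadjoint `A` contributes nothing to `Re⟨(zM(z) + A)x, x⟩`. For `x = (v, q)`,
`Re⟨zM(z)x, x⟩ = Re z ‖v‖² + Re⟨M₁(z)x, v⟩ + Re z ⟨k⁻¹q, q⟩`, where `⟨k⁻¹q, q⟩` is real (`k` is
selfadjoint) and at least `d / (‖k‖² + 1) ‖q‖²` (`k ≥ d`), while `‖M₁(z)‖ ≤ C` uniformly on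
`Re z ≥ 0` because the delays are positive. With `m = min 1 (d / (‖k‖² + 1))` this gives
`Re⟨(zM(z) + A)x, x⟩ ≥ (m Re z - C)‖x‖² ≥ ‖x‖²` as soon as `Re z ≥ (1 + C) / m`.
-/

open scoped ComplexConjugate

section
variable {𝕜 E : Type*} [RCLike 𝕜] [NormedAddCommGroup E] [InnerProductSpace 𝕜 E]

open RCLike

theorem LinearPMap.re_inner_apply_self_eq_zero_of_adjoint_eq_neg [CompleteSpace E]
    {T : E →ₗ.[𝕜] E} (hT : Dense (T.domain : Set E)) (hskew : T.adjoint = -T) (x : T.domain) :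
    re (inner 𝕜 (T x) (x : E)) = 0 := by
  have hformal := LinearPMap.adjoint_isFormalAdjoint hT
  rw [hskew] at hformal
  have hx := congrArg re (hformal x x)
  rw [neg_apply, inner_neg_left, _root_.map_neg, inner_re_symm (x : E)] at hx
  linarith

theorem IsSelfAdjoint.coe_re_inner_rightInverse_apply_self [CompleteSpace E] {k kinv : E →L[𝕜] E}
    (hk : IsSelfAdjoint k) (hinv : ∀ y, k (kinv y) = y) (q : E) :
    (re (inner 𝕜 (kinv q) q) : 𝕜) = inner 𝕜 (kinv q) q := by
  simpa [hinv] using hk.isSymmetric.coe_re_inner_self_apply (kinv q)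

theorem le_re_inner_rightInverse_apply_self {k kinv : E →L[𝕜] E} {d : ℝ} (hd : 0 ≤ d)
    (hcoer : ∀ q, d * ‖q‖ ^ 2 ≤ re (inner 𝕜 (k q) q)) (hinv : ∀ y, k (kinv y) = y) (q : E) :
    d / (‖k‖ ^ 2 + 1) * ‖q‖ ^ 2 ≤ re (inner 𝕜 (kinv q) q) := by
  set a := kinv q
  have hq : ‖q‖ ≤ ‖k‖ * ‖a‖ := hinv q ▸ k.le_opNorm a
  have ha : d * ‖a‖ ^ 2 ≤ re (inner 𝕜 a q) := by
    calc d * ‖a‖ ^ 2 ≤ re (inner 𝕜 (k a) a) := hcoer a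
      _ = re (inner 𝕜 a q) := by rw [inner_re_symm, hinv]
  rw [div_mul_eq_mul_div, div_le_iff₀ (by positivity)]
  have hq2 : ‖q‖ ^ 2 ≤ ‖k‖ ^ 2 * ‖a‖ ^ 2 := by
    rw [← mul_pow]; exact pow_le_pow_left₀ (norm_nonneg q) hq 2
  nlinarith [mul_le_mul_of_nonneg_left hq2 hd, sq_nonneg ‖k‖, sq_nonneg ‖a‖]

end

theorem Complex.norm_exp_neg_mul_le_one {r : ℝ} (hr : 0 ≤ r) {z : ℂ} (hz : 0 ≤ z.re) :
    ‖Complex.exp (-(r : ℂ) * z)‖ ≤ 1 := by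
  rw [Complex.norm_exp, Real.exp_le_one_iff]
  simp only [neg_mul, Complex.neg_re, Complex.re_ofReal_mul, neg_nonpos]
  positivity

section
variable {V : Type*} [NormedAddCommGroup V] [InnerProductSpace ℂ V] {n : ℕ} {c₀ : V →L[ℂ] V}
  {c : Fin n → V →L[ℂ] V} {kinv : (PiLp 2 fun _ : Fin n => V) →L[ℂ] (PiLp 2 fun _ : Fin n => V)}
  {h : Fin (n + 1) → ℝ} {z : ℂ}

theorem norm_delayM1_le (hh : ∀ i, 0 ≤ h i) (hz : 0 ≤ z.re)
    (x : WithLp 2 (V × PiLp 2 fun _ : Fin n => V)) :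
    ‖delayM1 n c₀ c kinv h z x‖ ≤ (‖c₀‖ + (∑ i, ‖c i‖) * ‖kinv‖) * ‖x‖ := by
  have hexp (i : Fin (n + 1)) := Complex.norm_exp_neg_mul_le_one (hh i) hz
  have h₀ : ‖Complex.exp (-(h 0 : ℂ) * z) • c₀ x.fst‖ ≤ ‖c₀‖ * ‖x‖ :=
    (norm_smul_le _ _).trans <| (mul_le_of_le_one_left (norm_nonneg _) (hexp 0)).trans
      (c₀.le_opNorm_of_le x.norm_fst_le)
  have hᵢ (i : Fin n) : ‖Complex.exp (-(h i.succ : ℂ) * z) • c i (kinv x.snd i)‖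
      ≤ ‖c i‖ * ‖kinv‖ * ‖x‖ := by
    rw [mul_assoc]
    exact (norm_smul_le _ _).trans <| (mul_le_of_le_one_left (norm_nonneg _) (hexp i.succ)).trans <|
      (c i).le_opNorm_of_le <| (PiLp.norm_apply_le _ i).trans <|
        kinv.le_opNorm_of_le x.norm_snd_le
  calc ‖delayM1 n c₀ c kinv h z x‖
      = ‖Complex.exp (-(h 0 : ℂ) * z) • c₀ x.fst
          - ∑ i, Complex.exp (-(h i.succ : ℂ) * z) • c i (kinv x.snd i)‖ := rfl
    _ ≤ ‖Complex.exp (-(h 0 : ℂ) * z) • c₀ x.fst‖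
        + ∑ i, ‖Complex.exp (-(h i.succ : ℂ) * z) • c i (kinv x.snd i)‖ :=
        (norm_sub_le _ _).trans (add_le_add le_rfl (norm_sum_le _ _))
    _ ≤ ‖c₀‖ * ‖x‖ + ∑ i, ‖c i‖ * ‖kinv‖ * ‖x‖ :=
        add_le_add h₀ (Finset.sum_le_sum fun i _ => hᵢ i)
    _ = (‖c₀‖ + (∑ i, ‖c i‖) * ‖kinv‖) * ‖x‖ := by
        rw [← Finset.sum_mul, ← Finset.sum_mul]; ring

theorem inner_smul_delayM_self (hz : z ≠ 0) (x : WithLp 2 (V × PiLp 2 fun _ : Fin n => V)) :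
    ⟪z • delayM n c₀ c kinv h z x, x⟫ = conj z * (‖x.fst‖ : ℂ) ^ 2
      + ⟪delayM1 n c₀ c kinv h z x, x.fst⟫ + conj z * ⟪kinv x.snd, x.snd⟫ := by
  have hsplit : ⟪delayM n c₀ c kinv h z x, x⟫
      = ⟪x.fst + z⁻¹ • delayM1 n c₀ c kinv h z x, x.fst⟫ + ⟪kinv x.snd, x.snd⟫ := rfl
  rw [inner_smul_left, hsplit, inner_add_left, inner_smul_left, inner_self_eq_norm_sq_to_K,
    map_inv₀, mul_add, mul_add, mul_inv_cancel_left₀ ((map_ne_zero _).mpr hz)]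
  rfl

theorem le_re_inner_smul_delayM_self (hh : ∀ i, 0 ≤ h i) (hz : 0 < z.re) {m : ℝ} (hm : m ≤ 1)
    (hreal : ∀ q, ((⟪kinv q, q⟫ : ℂ).re : ℂ) = ⟪kinv q, q⟫)
    (hcoer : ∀ q, m * ‖q‖ ^ 2 ≤ (⟪kinv q, q⟫ : ℂ).re)
    (x : WithLp 2 (V × PiLp 2 fun _ : Fin n => V)) :
    (z.re * m - (‖c₀‖ + (∑ i, ‖c i‖) * ‖kinv‖)) * ‖x‖ ^ 2
      ≤ (⟪z • delayM n c₀ c kinv h z x, x⟫ : ℂ).re := by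
  set C := ‖c₀‖ + (∑ i, ‖c i‖) * ‖kinv‖
  have hM₁ : -(C * ‖x‖ ^ 2) ≤ (⟪delayM1 n c₀ c kinv h z x, x.fst⟫ : ℂ).re := by
    have hbound : |(⟪delayM1 n c₀ c kinv h z x, x.fst⟫ : ℂ).re| ≤ C * ‖x‖ * ‖x‖ :=
      (Complex.abs_re_le_norm _).trans <| (norm_inner_le_norm _ _).trans <|
        mul_le_mul (norm_delayM1_le hh hz.le x) x.norm_fst_le (norm_nonneg _) (by positivity)
    nlinarith [neg_abs_le (⟪delayM1 n c₀ c kinv h z x, x.fst⟫ : ℂ).re]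
  rw [inner_smul_delayM_self (Complex.ne_zero_of_re_pos hz), ← hreal x.snd]
  simp only [Complex.add_re, ← Complex.ofReal_pow, Complex.re_mul_ofReal, Complex.conj_re]
  rw [WithLp.prod_norm_sq_eq_of_L2] at hM₁ ⊢
  nlinarith [mul_le_mul_of_nonneg_left (hcoer x.snd) hz.le,
    mul_le_mul_of_nonneg_left hm (by positivity : 0 ≤ z.re * ‖x.fst‖ ^ 2)]

end

theorem hyperbolic_delay_wellposed_general
    {V : Type*} [NormedAddCommGroup V] [InnerProductSpace ℂ V] [CompleteSpace V]
    (n : ℕ) (c₀ : V →L[ℂ] V) (c : Fin n → V →L[ℂ] V)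
    (k kinv : (PiLp 2 fun _ : Fin n => V) →L[ℂ] (PiLp 2 fun _ : Fin n => V))
    (d : ℝ) (hd : 0 < d) (hksa : IsSelfAdjoint k)
    (hk : ∀ q : PiLp 2 fun _ : Fin n => V, d * ‖q‖ ^ 2 ≤ (⟪k q, q⟫ : ℂ).re)
    (hkinv1 : k.comp kinv = ContinuousLinearMap.id ℂ _)
    (h : Fin (n + 1) → ℝ) (hh : ∀ i, 0 < h i)
    (A : WithLp 2 (V × PiLp 2 fun _ : Fin n => V) →ₗ.[ℂ]
      WithLp 2 (V × PiLp 2 fun _ : Fin n => V))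
    (hAdense : Dense (A.domain : Set (WithLp 2 (V × PiLp 2 fun _ : Fin n => V))))
    (hskew : A.adjoint = -A) :
    ∃ cc > (0:ℝ), ∃ ρ₀ > (0:ℝ), ∀ z : ℂ, ρ₀ ≤ z.re →
      ∀ (x : WithLp 2 (V × PiLp 2 fun _ : Fin n => V)) (hx : x ∈ A.domain),
        cc * ‖x‖ ^ 2 ≤ (⟪z • delayM n c₀ c kinv h z x + A ⟨x, hx⟩, x⟫ : ℂ).re := by
  set C := ‖c₀‖ + (∑ i, ‖c i‖) * ‖kinv‖
  set m := min 1 (d / (‖k‖ ^ 2 + 1))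
  have hm : 0 < m := lt_min one_pos (by positivity)
  have hkinv (y : PiLp 2 fun _ : Fin n => V) : k (kinv y) = y := congr($hkinv1 y)
  refine ⟨1, one_pos, (1 + C) / m, by positivity, fun z hz x hx => ?_⟩
  have hz₀ : 0 < z.re := (by positivity : 0 < (1 + C) / m).trans_le hz
  have hzm : 1 + C ≤ z.re * m := (div_le_iff₀ hm).mp hz
  calc 1 * ‖x‖ ^ 2 ≤ (z.re * m - C) * ‖x‖ ^ 2 := by gcongr; linarith
    _ ≤ (⟪z • delayM n c₀ c kinv h z x, x⟫ : ℂ).re :=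
      le_re_inner_smul_delayM_self (fun i => (hh i).le) hz₀ (min_le_left _ _)
        (hksa.coe_re_inner_rightInverse_apply_self hkinv)
        (fun q => (le_re_inner_rightInverse_apply_self hd.le hk hkinv q).trans' <| by
          gcongr; exact min_le_right _ _)
        x
    _ = (⟪z • delayM n c₀ c kinv h z x + A ⟨x, hx⟩, x⟫ : ℂ).re := by
      have hA := A.re_inner_apply_self_eq_zero_of_adjoint_eq_neg hAdense hskew ⟨x, hx⟩
      rw [RCLike.re_to_complex] at hA
      rw [inner_add_left, Complex.add_re, hA, add_zero]

/-- Well-posedness of the hyperbolic delay system: with `V = L₂(Ω)`,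
`c₀,…,c_n ∈ L(L₂(Ω))`, `k` selfadjoint with `k ≥ d > 0` (with bounded inverse `k⁻¹`),
delays `h₀,…,h_n > 0`, and `A` the skew-selfadjoint block operator
`((0,div₀),(grad,0))` (or `((0,div),(grad₀,0))`) on `L₂(Ω) × L₂(Ω)ⁿ`, there are
`c > 0` and `ρ₀ > 0` such that `Re⟨(zM(z)+A)x, x⟩ ≥ c‖x‖²` for all `Re z ≥ ρ₀` and
`x ∈ dom(A)`; in particular the evolutionary problem associated with `(M,A)` is
well-posed. -/
theorem hyperbolic_delay_wellposed
    {V : Type*} [NormedAddCommGroup V] [InnerProductSpace ℂ V] [CompleteSpace V]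
    (n : ℕ) (c₀ : V →L[ℂ] V) (c : Fin n → V →L[ℂ] V)
    (k kinv : (PiLp 2 fun _ : Fin n => V) →L[ℂ] (PiLp 2 fun _ : Fin n => V))
    (d : ℝ) (hd : 0 < d) (hksa : IsSelfAdjoint k)
    (hk : ∀ q : PiLp 2 fun _ : Fin n => V, d * ‖q‖ ^ 2 ≤ (⟪k q, q⟫ : ℂ).re)
    (hkinv1 : k.comp kinv = ContinuousLinearMap.id ℂ _)
    (hkinv2 : kinv.comp k = ContinuousLinearMap.id ℂ _)
    (h : Fin (n + 1) → ℝ) (hh : ∀ i, 0 < h i)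
    (A : WithLp 2 (V × PiLp 2 fun _ : Fin n => V) →ₗ.[ℂ]
      WithLp 2 (V × PiLp 2 fun _ : Fin n => V))
    (hAdense : Dense (A.domain : Set (WithLp 2 (V × PiLp 2 fun _ : Fin n => V))))
    (hskew : A.adjoint = -A) :
    ∃ cc > (0:ℝ), ∃ ρ₀ > (0:ℝ), ∀ z : ℂ, ρ₀ ≤ z.re →
      ∀ (x : WithLp 2 (V × PiLp 2 fun _ : Fin n => V)) (hx : x ∈ A.domain),
        cc * ‖x‖ ^ 2 ≤ (⟪z • delayM n c₀ c kinv h z x + A ⟨x, hx⟩, x⟫ : ℂ).re :=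
  hyperbolic_delay_wellposed_general n c₀ c k kinv d hd hksa hk hkinv1 h hh A hAdense hskew
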